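/- arXiv:1611.06394 — 2 statements merged into one kernel-verified Lean document; each statement's English description precedes it below -/
import Mathlib

section
/- In the hexagonal lattice G_HEX = { x·(2,0,0) + y·(1,√3,0) + z·(1,√(1/3),√(8/3)) : x,y,z ∈ ℤ }, every point has exactly 12 points of G_HEX at Euclidean distance exactly 2 from it. -/
/-- The 3-dimensional hexagonal lattice. -/
def hexLattice3 : Set (EuclideanSpace ℝ (Fin 3)) :=
  {p | ∃ x y z : ℤ, p = x • (!₂[2, 0, 0] : EuclideanSpace ℝ (Fin 3)) +
      y • (!₂[1, Real.sqrt 3, 0] : EuclideanSpace ℝ (Fin 3)) +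
      z • (!₂[1, Real.sqrt (1/3), Real.sqrt (8/3)] : EuclideanSpace ℝ (Fin 3))}

noncomputable def vv (a b c : ℤ) : EuclideanSpace ℝ (Fin 3) :=
  a • (!₂[2, 0, 0] : EuclideanSpace ℝ (Fin 3)) +
  b • (!₂[1, Real.sqrt 3, 0] : EuclideanSpace ℝ (Fin 3)) +
  c • (!₂[1, Real.sqrt (1/3), Real.sqrt (8/3)] : EuclideanSpace ℝ (Fin 3))

lemma vv0 (a b c : ℤ) : vv a b c 0 = 2*a + b + c := by
  simp [vv, ← Int.cast_smul_eq_zsmul ℝ]; ring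

lemma vv1 (a b c : ℤ) : vv a b c 1 = Real.sqrt 3 * b + Real.sqrt (1/3) * c := by
  simp [vv, ← Int.cast_smul_eq_zsmul ℝ]; ring

lemma vv2 (a b c : ℤ) : vv a b c 2 = Real.sqrt (8/3) * c := by
  simp [vv, ← Int.cast_smul_eq_zsmul ℝ]; ring

lemma norm_vv (a b c : ℤ) :
    ‖vv a b c‖ = 2 ↔ a^2+b^2+c^2+a*b+a*c+b*c = 1 := by
  have hs3 : Real.sqrt 3 ^ 2 = 3 := Real.sq_sqrt (by norm_num)
  have hs13 : Real.sqrt (1/3) ^ 2 = 1/3 := Real.sq_sqrt (by norm_num)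
  have hs83 : Real.sqrt (8/3) ^ 2 = 8/3 := Real.sq_sqrt (by norm_num)
  have hmul : Real.sqrt 3 * Real.sqrt (1/3) = 1 := by
    rw [← Real.sqrt_mul (by norm_num)]; norm_num
  have hnorm : ‖vv a b c‖ ^ 2 = 4 * ((a:ℝ)^2+b^2+c^2+a*b+a*c+b*c) := by
    rw [EuclideanSpace.norm_eq, Real.sq_sqrt (by positivity)]
    rw [Fin.sum_univ_three, vv0, vv1, vv2]
    simp only [Real.norm_eq_abs, sq_abs]
    linear_combination (b:ℝ)^2*hs3 + (c:ℝ)^2*hs13 + (c:ℝ)^2*hs83 + 2*(b:ℝ)*(c:ℝ)*hmul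
  constructor
  · intro h
    have h4 : (4:ℝ) * ((a:ℝ)^2+b^2+c^2+a*b+a*c+b*c) = 4 := by rw [← hnorm, h]; norm_num
    have : ((a^2+b^2+c^2+a*b+a*c+b*c : ℤ) : ℝ) = 1 := by push_cast; linarith
    exact_mod_cast this
  · intro h
    have h' : ((a:ℝ)^2+b^2+c^2+a*b+a*c+b*c) = 1 := by exact_mod_cast congrArg (Int.cast : ℤ → ℝ) h
    have h2 : ‖vv a b c‖ ^ 2 = 4 := by rw [hnorm, h']; norm_num
    have h0 := norm_nonneg (vv a b c)
    have : (‖vv a b c‖ - 2) * (‖vv a b c‖ + 2) = 0 := by nlinarith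
    rcases mul_eq_zero.mp this with h | h
    · linarith
    · linarith

def S12 : Finset (ℤ × ℤ × ℤ) :=
  {(1,0,0),(-1,0,0),(0,1,0),(0,-1,0),(0,0,1),(0,0,-1),
   (1,-1,0),(-1,1,0),(1,0,-1),(-1,0,1),(0,1,-1),(0,-1,1)}

lemma solQ (a b c : ℤ) :
    a^2+b^2+c^2+a*b+a*c+b*c = 1 ↔ (a,b,c) ∈ S12 := by
  constructor
  · intro h
    have key : a^2+b^2+c^2+(a+b+c)^2 = 2 := by nlinarith
    have ha : -1 ≤ a ∧ a ≤ 1 := by constructor <;> nlinarith [sq_nonneg b, sq_nonneg c, sq_nonneg (a+b+c), sq_nonneg (a+1), sq_nonneg (a-1)]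
    have hb : -1 ≤ b ∧ b ≤ 1 := by constructor <;> nlinarith [sq_nonneg a, sq_nonneg c, sq_nonneg (a+b+c), sq_nonneg (b+1), sq_nonneg (b-1)]
    have hc : -1 ≤ c ∧ c ≤ 1 := by constructor <;> nlinarith [sq_nonneg a, sq_nonneg b, sq_nonneg (a+b+c), sq_nonneg (c+1), sq_nonneg (c-1)]
    obtain ⟨ha1, ha2⟩ := ha; obtain ⟨hb1, hb2⟩ := hb; obtain ⟨hc1, hc2⟩ := hc
    interval_cases a <;> interval_cases b <;> interval_cases c <;>
      first
      | (exfalso; omega)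
      | decide
  · intro h
    fin_cases h <;> decide

lemma vv_sub (a b c a' b' c' : ℤ) :
    vv a b c - vv a' b' c' = vv (a-a') (b-b') (c-c') := by
  unfold vv; module

lemma vv_inj {a b c a' b' c' : ℤ} (h : vv a b c = vv a' b' c') :
    a = a' ∧ b = b' ∧ c = c' := by
  have h2 := congrArg (fun v : EuclideanSpace ℝ (Fin 3) => v 2) h
  have h1 := congrArg (fun v : EuclideanSpace ℝ (Fin 3) => v 1) h
  have h0 := congrArg (fun v : EuclideanSpace ℝ (Fin 3) => v 0) h
  rw [vv2, vv2] at h2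
  rw [vv1, vv1] at h1
  rw [vv0, vv0] at h0
  have s83 : Real.sqrt (8/3) ≠ 0 := by positivity
  have s3 : Real.sqrt 3 ≠ 0 := by positivity
  have hc : (c:ℝ) = c' := mul_left_cancel₀ s83 h2
  have hb : (b:ℝ) = b' := by
    rw [hc] at h1
    have : Real.sqrt 3 * b = Real.sqrt 3 * b' := by linarith
    exact mul_left_cancel₀ s3 this
  have ha : (a:ℝ) = a' := by
    rw [hb] at h0; rw [hc] at h0; linarith
  exact ⟨by exact_mod_cast ha, by exact_mod_cast hb, by exact_mod_cast hc⟩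

theorem hexLattice3_twelve_neighbours :
    ∀ p ∈ hexLattice3, {q | q ∈ hexLattice3 ∧ dist p q = 2}.ncard = 12 := by
  intro p hp
  obtain ⟨x, y, z, rfl⟩ := hp
  have hp : (x • (!₂[2, 0, 0] : EuclideanSpace ℝ (Fin 3)) +
      y • (!₂[1, Real.sqrt 3, 0] : EuclideanSpace ℝ (Fin 3)) +
      z • (!₂[1, Real.sqrt (1/3), Real.sqrt (8/3)] : EuclideanSpace ℝ (Fin 3))) = vv x y z := rfl
  rw [hp]
  have hset : {q | q ∈ hexLattice3 ∧ dist (vv x y z) q = 2} =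
      (fun t : ℤ × ℤ × ℤ => vv (x + t.1) (y + t.2.1) (z + t.2.2)) '' ↑S12 := by
    ext q
    constructor
    · rintro ⟨⟨x', y', z', rfl⟩, hd⟩
      have hq : (x' • (!₂[2, 0, 0] : EuclideanSpace ℝ (Fin 3)) +
          y' • (!₂[1, Real.sqrt 3, 0] : EuclideanSpace ℝ (Fin 3)) +
          z' • (!₂[1, Real.sqrt (1/3), Real.sqrt (8/3)] : EuclideanSpace ℝ (Fin 3))) = vv x' y' z' := rfl
      rw [hq] at hd ⊢
      have hd2 : ‖vv (x'-x) (y'-y) (z'-z)‖ = 2 := by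
        rw [← vv_sub, ← dist_eq_norm, dist_comm]; exact hd
      refine ⟨(x'-x, y'-y, z'-z), (solQ _ _ _).mp ((norm_vv _ _ _).mp hd2), ?_⟩
      have e1 : x + (x'-x) = x' := by ring
      have e2 : y + (y'-y) = y' := by ring
      have e3 : z + (z'-z) = z' := by ring
      simp only [e1, e2, e3]
    · rintro ⟨⟨a, b, c⟩, ht, rfl⟩
      refine ⟨⟨x+a, y+b, z+c, rfl⟩, ?_⟩
      have : vv (x+a) (y+b) (z+c) - vv x y z = vv a b c := by
        rw [vv_sub]; congr 1 <;> ring_nf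
      rw [dist_comm, dist_eq_norm, this]
      exact (norm_vv a b c).mpr ((solQ a b c).mpr ht)
  rw [hset]
  rw [Set.ncard_image_of_injOn, Set.ncard_coe_finset]
  · decide
  · rintro ⟨s1, s2, s3⟩ _ ⟨t1, t2, t3⟩ _ h
    obtain ⟨h1, h2, h3⟩ := vv_inj h
    dsimp only at h1 h2 h3
    simp only [Prod.mk.injEq]
    refine ⟨by omega, by omega, by omega⟩
end

section
/- There exists a configuration of 6 points in the hexagonal lattice G_HEX ⊂ ℝ³ such that the number of unordered pairs of points at Euclidean distance exactly 2 equals 12; that is, the contact number 12 for 6 unit balls is achievable on a hexagonal grid. -/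
open scoped Classical

noncomputable def hexf (v : ℤ × ℤ × ℤ) : EuclideanSpace ℝ (Fin 3) :=
  v.1 • (!₂[2, 0, 0] : EuclideanSpace ℝ (Fin 3)) +
  v.2.1 • (!₂[1, Real.sqrt 3, 0] : EuclideanSpace ℝ (Fin 3)) +
  v.2.2 • (!₂[1, Real.sqrt (1/3), Real.sqrt (8/3)] : EuclideanSpace ℝ (Fin 3))

def hexQ (v w : ℤ × ℤ × ℤ) : ℤ :=
  (v.1-w.1)^2 + (v.2.1-w.2.1)^2 + (v.2.2-w.2.2)^2
    + (v.1-w.1)*(v.2.1-w.2.1) + (v.1-w.1)*(v.2.2-w.2.2)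
    + (v.2.1-w.2.1)*(v.2.2-w.2.2)

set_option maxHeartbeats 1000000 in
lemma hexf_dist_sq (u v : ℤ × ℤ × ℤ) :
    dist (hexf u) (hexf v) ^ 2 = 4 * ((hexQ u v : ℤ) : ℝ) := by
  obtain ⟨x, y, z⟩ := u
  obtain ⟨a, b, c⟩ := v
  have h3 : Real.sqrt 3 ^ 2 = 3 := Real.sq_sqrt (by norm_num)
  have h13 : Real.sqrt (1/3) ^ 2 = 1/3 := Real.sq_sqrt (by norm_num)
  have h83 : Real.sqrt (8/3) ^ 2 = 8/3 := Real.sq_sqrt (by norm_num)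
  have hmul : Real.sqrt 3 * Real.sqrt (1/3) = 1 := by
    rw [← Real.sqrt_mul (by norm_num)]; norm_num
  rw [EuclideanSpace.dist_eq]
  rw [Real.sq_sqrt (by positivity)]
  simp only [hexf, hexQ, Fin.sum_univ_three]
  simp only [PiLp.add_apply, PiLp.smul_apply, PiLp.toLp_apply, Pi.add_apply, Pi.mul_apply, Pi.smul_apply,
    Matrix.cons_val_zero, Matrix.cons_val_one, Matrix.head_cons, Matrix.cons_val_two,
    Matrix.tail_cons, zsmul_eq_mul, Real.dist_eq]
  simp only [sq_abs]
  push_cast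
  linear_combination ((y:ℝ)-b)^2 * h3 + ((z:ℝ)-c)^2 * h13 + ((z:ℝ)-c)^2 * h83 +
    2*((y:ℝ)-b)*((z:ℝ)-c) * hmul

lemma hexf_dist_eq_two_iff (u v : ℤ × ℤ × ℤ) :
    dist (hexf u) (hexf v) = 2 ↔ hexQ u v = 1 := by
  constructor
  · intro h
    have h2 := hexf_dist_sq u v
    rw [h] at h2
    norm_num at h2
    exact_mod_cast h2
  · intro h
    have h2 := hexf_dist_sq u v
    rw [h] at h2
    have : dist (hexf u) (hexf v) ^ 2 = 2 ^ 2 := by rw [h2]; norm_num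
    have hd : (0:ℝ) ≤ dist (hexf u) (hexf v) := dist_nonneg
    nlinarith [this, hd]

lemma hexf_injective : Function.Injective hexf := by
  intro u v h
  have h2 := hexf_dist_sq u v
  rw [h, dist_self] at h2
  norm_num at h2
  have hq : hexQ u v = 0 := by exact_mod_cast h2
  obtain ⟨x, y, z⟩ := u
  obtain ⟨a, b, c⟩ := v
  simp only [hexQ] at hq
  have e1 : (x-a)^2 ≤ 0 := by
    nlinarith [sq_nonneg (x-a+(y-b)), sq_nonneg (x-a+(z-c)), sq_nonneg (y-b+(z-c)),
      sq_nonneg (y-b), sq_nonneg (z-c)]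
  have e2 : (y-b)^2 ≤ 0 := by
    nlinarith [sq_nonneg (x-a+(y-b)), sq_nonneg (x-a+(z-c)), sq_nonneg (y-b+(z-c)),
      sq_nonneg (x-a), sq_nonneg (z-c)]
  have e3 : (z-c)^2 ≤ 0 := by
    nlinarith [sq_nonneg (x-a+(y-b)), sq_nonneg (x-a+(z-c)), sq_nonneg (y-b+(z-c)),
      sq_nonneg (x-a), sq_nonneg (y-b)]
  have f1 : x - a = 0 := by nlinarith [sq_nonneg (x-a)]
  have f2 : y - b = 0 := by nlinarith [sq_nonneg (y-b)]
  have f3 : z - c = 0 := by nlinarith [sq_nonneg (z-c)]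
  have : x = a := by omega
  have : y = b := by omega
  have : z = c := by omega
  subst ‹x = a›; subst ‹y = b›; subst ‹z = c›; rfl

def hexS : Finset (ℤ × ℤ × ℤ) :=
  {(0,0,1), (0,1,0), (0,1,1), (1,0,0), (1,0,1), (1,1,0)}

theorem six_balls_twelve_contacts_on_hex_grid :
    ∃ F : Finset (EuclideanSpace ℝ (Fin 3)),
      (∀ p ∈ F, p ∈ hexLattice3) ∧ F.card = 6 ∧
      (F.offDiag.filter fun p => dist p.1 p.2 = 2).card = 2 * 12 := by
  refine ⟨hexS.image hexf, ?_, ?_, ?_⟩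
  · intro p hp
    obtain ⟨v, _, rfl⟩ := Finset.mem_image.mp hp
    exact ⟨v.1, v.2.1, v.2.2, rfl⟩
  · rw [Finset.card_image_of_injective _ hexf_injective]
    decide
  · have hoff : (hexS.image hexf).offDiag = hexS.offDiag.image (Prod.map hexf hexf) := by
      ext x
      simp only [Finset.mem_offDiag, Finset.mem_image]
      constructor
      · rintro ⟨⟨u, hu, hup⟩, ⟨v, hv, hvp⟩, hne⟩
        refine ⟨(u, v), ⟨hu, hv, ?_⟩, ?_⟩
        · intro huv
          simp only at huv
          subst huv
          exact hne (by rw [← hup, ← hvp])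
        · simp only [Prod.map]
          exact Prod.ext hup hvp
      · rintro ⟨⟨u, v⟩, ha, rfl⟩
        refine ⟨⟨u, ha.1, rfl⟩, ⟨v, ha.2.1, rfl⟩, fun h => ha.2.2 ?_⟩
        simp only [Prod.map] at h
        have h2 := hexf_injective h
        rw [h2]
    rw [hoff, Finset.filter_image,
      Finset.card_image_of_injective _
        ((Prod.map_injective).mpr ⟨hexf_injective, hexf_injective⟩)]
    have : (hexS.offDiag.filter fun v => dist (Prod.map hexf hexf v).1
        (Prod.map hexf hexf v).2 = 2) =
        hexS.offDiag.filter fun v => hexQ v.1 v.2 = 1 := by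
      apply Finset.filter_congr
      intro v _
      simp only [Prod.map, eq_iff_iff]
      exact hexf_dist_eq_two_iff v.1 v.2
    rw [this]
    decide
end
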